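/- Non-uniqueness for first-order augmented representations: there exist infinitely many distinct pairs (F, G) of smooth planar vector fields such that the x-component of the solution of (ẋ, ȧ) = (F(x,a), G(x,a)) with a(0) = 0 equals a fixed function realizing given second-order dynamics. Concretely, for each nonzero C the system ẋ = Ca - (ω+γ)x + ω, ȧ = (ω-γ)a - (2ω²x + γω - ω²)/C yields the same x-trajectories (for the same x(0)) although the vector fields differ for distinct values of C. -/
import Mathlib


/-- Non-uniqueness of augmented first-order representations: the family of planar
systems `ẋ = Ca - (ω+γ)x + ω`, `ȧ = (ω-γ)a - (2ω²x + γω - ω²)/C` (for `C ≠ 0`)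
consists of pairwise distinct vector fields, yet every solution with `a 0 = 0`
has its `x`-component satisfying the same second-order dynamics
`ẍ = -(ω²+γ²)x - 2γẋ` with `ẋ(0) = -(ω+γ)x(0) + ω`. -/
theorem augmented_representation_nonunique (ω γ : ℝ) :
    let Fc : ℝ → (ℝ × ℝ → ℝ) := fun C p => C * p.2 - (ω + γ) * p.1 + ω
    let Gc : ℝ → (ℝ × ℝ → ℝ) := fun C p =>
      (ω - γ) * p.2 - (1 / C) * (2 * ω ^ 2 * p.1 + γ * ω - ω ^ 2)
    (∀ C C' : ℝ, C ≠ 0 → C' ≠ 0 → C ≠ C' → (Fc C, Gc C) ≠ (Fc C', Gc C')) ∧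
    (∀ C : ℝ, C ≠ 0 → ∀ x a : ℝ → ℝ,
      (∀ t, HasDerivAt x (Fc C (x t, a t)) t) →
      (∀ t, HasDerivAt a (Gc C (x t, a t)) t) →
      a 0 = 0 →
      (∀ t, deriv (deriv x) t = -(ω ^ 2 + γ ^ 2) * x t - 2 * γ * deriv x t) ∧
      deriv x 0 = -(ω + γ) * x 0 + ω) := by
  intro Fc Gc
  constructor
  · intro C C' hC hC' hne h
    have h1 : Fc C (0, 1) = Fc C' (0, 1) := by
      rw [(Prod.mk.injEq _ _ _ _).mp h |>.1]
    simp only [Fc] at h1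
    apply hne
    nlinarith [h1]
  · intro C hC x a hx ha ha0
    have hdx : ∀ t, deriv x t = C * a t - (ω + γ) * x t + ω := by
      intro t
      have := (hx t).deriv
      simpa [Fc] using this
    have key : ∀ t, HasDerivAt (deriv x) (-(ω ^ 2 + γ ^ 2) * x t - 2 * γ * deriv x t) t := by
      intro t
      have h2 : HasDerivAt (fun s => C * a s - (ω + γ) * x s + ω)
          (C * Gc C (x t, a t) - (ω + γ) * Fc C (x t, a t)) t :=
        (((ha t).const_mul C).sub ((hx t).const_mul (ω + γ))).add_const ω
      have heq : (fun s => C * a s - (ω + γ) * x s + ω) = deriv x :=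
        funext fun s => (hdx s).symm
      rw [heq] at h2
      convert h2 using 1
      rw [hdx t]
      simp only [Fc, Gc]
      field_simp
      ring
    refine ⟨fun t => (key t).deriv, ?_⟩
    rw [hdx 0, ha0]; ring
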